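/- arXiv:2403.18704 — 2 statements merged into one kernel-verified Lean document; each statement's English description precedes it below -/
import Mathlib

section
/- Let X̌ and Y be real normed spaces, U ⊆ X̌, F̌: U → Y, x̌₀ ∈ U, z₀ ∈ Y, and let T: X̌ → Y be a bounded linear operator such that ‖F̌(x̌₁) − F̌(x̌₂) − T(x̌₁ − x̌₂)‖ ≤ c_r·‖x̌₁ − x̌₂‖ for all x̌₁, x̌₂ ∈ U, with c_r ∈ (0,1). On X := X̌ × Y with norm ‖(a,b)‖ := ‖a‖ + ‖b‖, define F(x̌, z) := F̌(x̌) + z, K(a, b) := T(a) + b, x₀ := (x̌₀, z₀), and r(x̌, z) := (x̌ − x̌₀, z − z₀ + F̌(x̌) − F̌(x̌₀) − T(x̌ − x̌₀)) for (x̌, z) ∈ U × Y. Then: (i) the range invariance identity F(x) − F(x₀) = K(r(x)) holds for all x ∈ U × Y; (ii) ‖r(x₁) − r(x₂) − (x₁ − x₂)‖ ≤ c_r·‖x₁ − x₂‖ for all x₁, x₂ ∈ U × Y; (iii) consequently (1 − c_r)·‖x₁ − x₂‖ ≤ ‖r(x₁) − r(x₂)‖ ≤ (1 + c_r)·‖x₁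 − x₂‖ for all x₁, x₂ ∈ U × Y, so r is injective, Lipschitz with constant 1 + c_r, and its inverse on r(U × Y) is Lipschitz with constant 1/(1 − c_r). -/
/-- The canonical relaxation leading to range invariance (Section 2.4): extending
`F̌ : U → Y` by an artificial data-space variable `z` to `F(x̌,z) = F̌(x̌) + z` on
`X = X̌ × Y` (with sum norm `‖(a,b)‖ = ‖a‖ + ‖b‖`), the operator
`r(x̌,z) = (x̌ − x̌₀, z − z₀ + F̌(x̌) − F̌(x̌₀) − T(x̌ − x̌₀))` satisfies
(i) the range invariance identity `F(x) − F(x₀) = K(r(x))` with `K(a,b) = T a + b`,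
(ii) `‖r(x₁) − r(x₂) − (x₁ − x₂)‖ ≤ c_r‖x₁ − x₂‖`, and (iii) the two-sided Lipschitz
estimate `(1−c_r)‖x₁−x₂‖ ≤ ‖r(x₁)−r(x₂)‖ ≤ (1+c_r)‖x₁−x₂‖`; in particular `r` is
injective on `U × Y`. -/
theorem stmt_18 {Xc Y : Type*}
    [NormedAddCommGroup Xc] [NormedSpace ℝ Xc]
    [NormedAddCommGroup Y] [NormedSpace ℝ Y]
    (U : Set Xc) (Fc : Xc → Y) (x₀ : Xc) (hx₀ : x₀ ∈ U) (z₀ : Y)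
    (T : Xc →L[ℝ] Y) (cr : ℝ) (hcr0 : 0 < cr) (hcr1 : cr < 1)
    (hT : ∀ x₁ ∈ U, ∀ x₂ ∈ U, ‖Fc x₁ - Fc x₂ - T (x₁ - x₂)‖ ≤ cr * ‖x₁ - x₂‖)
    (r : Xc × Y → Xc × Y)
    (hr : ∀ q : Xc × Y, r q = (q.1 - x₀, q.2 - z₀ + Fc q.1 - Fc x₀ - T (q.1 - x₀))) :
    -- (i) range invariance `F(x) − F(x₀) = K(r(x))`, componentwise in `Y`
    (∀ x : Xc × Y, x.1 ∈ U →
      (Fc x.1 + x.2) - (Fc x₀ + z₀) = T ((r x).1) + (r x).2) ∧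
    -- (ii) `‖r(x₁) − r(x₂) − (x₁ − x₂)‖ ≤ c_r·‖x₁ − x₂‖` in the sum norm
    (∀ x₁ x₂ : Xc × Y, x₁.1 ∈ U → x₂.1 ∈ U →
      ‖(r x₁ - r x₂ - (x₁ - x₂)).1‖ + ‖(r x₁ - r x₂ - (x₁ - x₂)).2‖ ≤
        cr * (‖(x₁ - x₂).1‖ + ‖(x₁ - x₂).2‖)) ∧
    -- (iii) two-sided Lipschitz estimates in the sum norm
    (∀ x₁ x₂ : Xc × Y, x₁.1 ∈ U → x₂.1 ∈ U →
      (1 - cr) * (‖(x₁ - x₂).1‖ + ‖(x₁ - x₂).2‖) ≤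
        ‖(r x₁ - r x₂).1‖ + ‖(r x₁ - r x₂).2‖ ∧
      ‖(r x₁ - r x₂).1‖ + ‖(r x₁ - r x₂).2‖ ≤
        (1 + cr) * (‖(x₁ - x₂).1‖ + ‖(x₁ - x₂).2‖)) ∧
    -- injectivity of `r` on `U × Y`
    (∀ x₁ x₂ : Xc × Y, x₁.1 ∈ U → x₂.1 ∈ U → r x₁ = r x₂ → x₁ = x₂) := by
  have c1 : ∀ x₁ x₂ : Xc × Y, (r x₁ - r x₂ - (x₁ - x₂)).1 = 0 := by
    intro x₁ x₂; simp [hr, Prod.sub_def]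
  have c2 : ∀ x₁ x₂ : Xc × Y, (r x₁ - r x₂ - (x₁ - x₂)).2 =
      Fc x₁.1 - Fc x₂.1 - T (x₁.1 - x₂.1) := by
    intro x₁ x₂; simp [hr, Prod.sub_def, map_sub]; abel
  have key : ∀ x₁ x₂ : Xc × Y, x₁.1 ∈ U → x₂.1 ∈ U →
      ‖(r x₁ - r x₂ - (x₁ - x₂)).1‖ + ‖(r x₁ - r x₂ - (x₁ - x₂)).2‖ ≤
        cr * (‖(x₁ - x₂).1‖ + ‖(x₁ - x₂).2‖) := by
    intro x₁ x₂ h₁ h₂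
    rw [c1, c2, norm_zero, zero_add]
    calc ‖Fc x₁.1 - Fc x₂.1 - T (x₁.1 - x₂.1)‖ ≤ cr * ‖x₁.1 - x₂.1‖ :=
          hT _ h₁ _ h₂
      _ ≤ cr * (‖(x₁ - x₂).1‖ + ‖(x₁ - x₂).2‖) := by
          apply mul_le_mul_of_nonneg_left _ hcr0.le
          simpa [Prod.sub_def] using le_add_of_nonneg_right (norm_nonneg (x₁.2 - x₂.2))
  refine ⟨?_, key, ?_, ?_⟩
  · intro x hx
    rw [hr]
    simp [map_sub]
    abel
  · intro x₁ x₂ h₁ h₂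
    have hk := key x₁ x₂ h₁ h₂
    have e1 : (r x₁ - r x₂).1 = (r x₁ - r x₂ - (x₁ - x₂)).1 + (x₁ - x₂).1 := by
      simp
    have e2 : (r x₁ - r x₂).2 = (r x₁ - r x₂ - (x₁ - x₂)).2 + (x₁ - x₂).2 := by
      simp
    have e1' : (x₁ - x₂).1 = (r x₁ - r x₂).1 - (r x₁ - r x₂ - (x₁ - x₂)).1 := by
      simp
    have e2' : (x₁ - x₂).2 = (r x₁ - r x₂).2 - (r x₁ - r x₂ - (x₁ - x₂)).2 := by
      simp
    constructor
    · have h1 : ‖(x₁ - x₂).1‖ ≤ ‖(r x₁ - r x₂).1‖ + ‖(r x₁ - r x₂ - (x₁ - x₂)).1‖ := by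
        rw [e1']; exact norm_sub_le _ _
      have h2 : ‖(x₁ - x₂).2‖ ≤ ‖(r x₁ - r x₂).2‖ + ‖(r x₁ - r x₂ - (x₁ - x₂)).2‖ := by
        rw [e2']; exact norm_sub_le _ _
      nlinarith [norm_nonneg (x₁ - x₂).1, norm_nonneg (x₁ - x₂).2]
    · have h1 : ‖(r x₁ - r x₂).1‖ ≤ ‖(r x₁ - r x₂ - (x₁ - x₂)).1‖ + ‖(x₁ - x₂).1‖ := by
        rw [e1]; exact norm_add_le _ _
      have h2 : ‖(r x₁ - r x₂).2‖ ≤ ‖(r x₁ - r x₂ - (x₁ - x₂)).2‖ + ‖(x₁ - x₂).2‖ := by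
        rw [e2]; exact norm_add_le _ _
      nlinarith
  · intro x₁ x₂ h₁ h₂ heq
    have hk := key x₁ x₂ h₁ h₂
    rw [heq, sub_self] at hk
    simp only [zero_sub, Prod.fst_neg, Prod.snd_neg, norm_neg, Prod.fst_sub,
      Prod.snd_sub] at hk
    have n1 := norm_nonneg (x₁.1 - x₂.1)
    have n2 := norm_nonneg (x₁.2 - x₂.2)
    have e1 : x₁.1 = x₂.1 := by
      rw [← sub_eq_zero, ← norm_eq_zero]; nlinarith
    have e2 : x₁.2 = x₂.2 := by
      rw [← sub_eq_zero, ← norm_eq_zero]; nlinarith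
    exact Prod.ext e1 e2
end

section
/- In Setting (V), let R(r̂) := Ř((I−P)(r⁻¹(r̂))) for r̂ ∈ X̃, fix α, β > 0 and η ≥ 0 with η ≤ C_η·δ^p, and suppose (r̂, x) ∈ X̃ × U satisfies J(r̂, x) ≤ J(r(x†), x†) + η, where J(r̂, x) := ‖K r̂ + F(x₀) − y^δ‖^p + α·R(r̂) + β·Q(r(x), r̂)^p + ‖P(x)‖^p. Then 2^{1−p}·‖K(r̂ − r(x†))‖^p + α·(R(r̂) − R(r(x†))) + β·Q(r(x), r̂)^p + ‖P(x)‖^p ≤ (2 + C_η)·δ^p. -/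
lemma helper_rpow (a b p : ℝ) (ha : 0 ≤ a) (hb : 0 ≤ b) (hp : 1 ≤ p) :
    (2 : ℝ) ^ (1 - p) * (a + b) ^ p ≤ a ^ p + b ^ p := by
  have h := NNReal.rpow_add_le_mul_rpow_add_rpow ⟨a, ha⟩ ⟨b, hb⟩ hp
  have h' : (a + b) ^ p ≤ (2 : ℝ) ^ (p - 1) * (a ^ p + b ^ p) := by
    exact_mod_cast h
  have h2 : (0 : ℝ) < (2 : ℝ) ^ (1 - p) := Real.rpow_pos_of_pos (by norm_num) _
  calc (2 : ℝ) ^ (1 - p) * (a + b) ^ p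
      ≤ (2 : ℝ) ^ (1 - p) * ((2 : ℝ) ^ (p - 1) * (a ^ p + b ^ p)) := by
        exact mul_le_mul_of_nonneg_left h' h2.le
    _ = a ^ p + b ^ p := by
        rw [← mul_assoc, ← Real.rpow_add (by norm_num)]
        norm_num

/-- The basic minimality estimate (2.19)/(2.26) for variational regularization:
comparing an `η`-minimizer with `(r(x†), x†)` yields
`2^{1−p}‖K(r̂−r(x†))‖^p + α(R(r̂) − R(r(x†))) + β·Q(r(x),r̂)^p + ‖P(x)‖^p ≤ (2+C_η)δ^p`. -/
theorem stmt_19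
    (p : ℝ) (hp : 1 ≤ p)
    {X Xt Y : Type*} [NormedAddCommGroup X] [NormedSpace ℝ X]
    [NormedAddCommGroup Xt] [NormedSpace ℝ Xt]
    [NormedAddCommGroup Y] [NormedSpace ℝ Y]
    (Xc : Submodule ℝ X) (U : Set X) (x0 xd : X)
    (hx0U : x0 ∈ U) (hx0c : x0 ∈ Xc) (hxdU : xd ∈ U) (hxdc : xd ∈ Xc)
    (F : X → Y) (K : Xt →L[ℝ] Y)
    (r : X → Xt) (rinv : Xt → X)
    (hrleft : ∀ x ∈ U, rinv (r x) = x)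
    (hrmem : ∀ v : Xt, rinv v ∈ U) (hrright : ∀ v : Xt, r (rinv v) = v)
    (Lr : ℝ) (hLr : ∀ x1 ∈ U, ∀ x2 ∈ U, ‖r x1 - r x2‖ ≤ Lr * ‖x1 - x2‖)
    (hRI : ∀ x ∈ U, F x - F x0 = K (r x))
    (P Ip : X → X) (hPIp : ∀ x, P x = x - Ip x)
    (hIpXc : ∀ x, Ip x ∈ Xc)
    (hPxd : P xd = 0) (hPx0 : P x0 = 0)
    (hIprinvU : ∀ v : Xt, Ip (rinv v) ∈ U)
    (δ : ℝ) (hδ : 0 < δ) (yδ : Y) (hnoise : ‖F xd - yδ‖ ≤ δ)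
    (Rc : X → ℝ) (hRcnn : ∀ x, 0 ≤ Rc x)
    (Q : Xt → Xt → ℝ) (hQnn : ∀ v1 v2, 0 ≤ Q v1 v2) (hQdiag : ∀ v, Q v v = 0)
    (α β : ℝ) (hα : 0 < α) (hβ : 0 < β)
    (Cη η : ℝ) (hCη : 0 < Cη) (hη0 : 0 ≤ η) (hη : η ≤ Cη * δ ^ p)
    (J : Xt → X → ℝ)
    (hJ : ∀ v x, J v x =
      ‖K v + F x0 - yδ‖ ^ p + α * Rc (Ip (rinv v)) + β * Q (r x) v ^ p + ‖P x‖ ^ p)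
    (rh : Xt) (xh : X) (hxhU : xh ∈ U)
    (hmin : J rh xh ≤ J (r xd) xd + η) :
    (2 : ℝ) ^ (1 - p) * ‖K (rh - r xd)‖ ^ p +
        α * (Rc (Ip (rinv rh)) - Rc (Ip (rinv (r xd)))) +
        β * Q (r xh) rh ^ p + ‖P xh‖ ^ p ≤ (2 + Cη) * δ ^ p := by
  have hp0 : p ≠ 0 := by linarith
  have hKxd : (K (r xd) : Y) = F xd - F x0 := (hRI xd hxdU).symm
  set A := ‖K rh + F x0 - yδ‖ with hA
  have hB : ‖K (r xd) + F x0 - yδ‖ = ‖F xd - yδ‖ := by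
    rw [hKxd]; congr 1; abel
  -- bound on J (r xd) xd
  have hJxd : J (r xd) xd ≤ δ ^ p + α * Rc (Ip (rinv (r xd))) := by
    rw [hJ, hB, hQdiag, hPxd]
    have h1 : ‖F xd - yδ‖ ^ p ≤ δ ^ p :=
      Real.rpow_le_rpow (norm_nonneg _) hnoise (by linarith)
    have h2 : (0 : ℝ) ^ p = 0 := Real.zero_rpow hp0
    rw [norm_zero, h2]
    linarith
  -- bound on the K term
  have hKbound : (2 : ℝ) ^ (1 - p) * ‖K (rh - r xd)‖ ^ p ≤ A ^ p + δ ^ p := by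
    have hnorm : ‖K (rh - r xd)‖ ≤ A + δ := by
      have : (K (rh - r xd) : Y) = (K rh + F x0 - yδ) - (K (r xd) + F x0 - yδ) := by
        rw [map_sub]; abel
      rw [this]
      calc ‖(K rh + F x0 - yδ) - (K (r xd) + F x0 - yδ)‖
          ≤ ‖K rh + F x0 - yδ‖ + ‖K (r xd) + F x0 - yδ‖ := norm_sub_le _ _
        _ ≤ A + δ := by rw [hB]; exact add_le_add le_rfl hnoise
    have h1 : ‖K (rh - r xd)‖ ^ p ≤ (A + δ) ^ p :=
      Real.rpow_le_rpow (norm_nonneg _) hnorm (by linarith)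
    have h2 : (0 : ℝ) < (2 : ℝ) ^ (1 - p) := Real.rpow_pos_of_pos (by norm_num) _
    calc (2 : ℝ) ^ (1 - p) * ‖K (rh - r xd)‖ ^ p
        ≤ (2 : ℝ) ^ (1 - p) * (A + δ) ^ p := mul_le_mul_of_nonneg_left h1 h2.le
      _ ≤ A ^ p + δ ^ p := helper_rpow A δ p (norm_nonneg _) hδ.le hp
  have hJrh : J rh xh = A ^ p + α * Rc (Ip (rinv rh)) + β * Q (r xh) rh ^ p + ‖P xh‖ ^ p :=
    hJ rh xh
  have : (2 : ℝ) ^ (1 - p) * ‖K (rh - r xd)‖ ^ p +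
      α * (Rc (Ip (rinv rh)) - Rc (Ip (rinv (r xd)))) +
      β * Q (r xh) rh ^ p + ‖P xh‖ ^ p ≤ 2 * δ ^ p + η := by
    have := hmin
    rw [hJrh] at this
    nlinarith [hJxd, hKbound]
  linarith [hη, this]
end
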